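/- (Theorem 4.2(ii)) Under the hypotheses guaranteeing the threshold δ̂* (σ̂_δ > 0 for all δ ≥ 0; c(δ) := (∫ q_F r̂_δ − μ_F μ̂_δ)/(σ_F σ̂_δ) continuous and strictly increasing on (0,∞) with limits ρ̂ < 1 at 0⁺ and 1 at ∞), and assuming additionally that for each fixed δ ≥ 0 the map d ↦ (∫ (γ + 2δ q_F) r̂_d − (1 + 2δμ_F) μ̂_d)/σ̂_d is decreasing in d on (δ, ∞), let ε ∈ (ε_min, ε̂_max) with ε̂_max := ε_min + 2σσ_F(1 − ρ̂), let δ̂* > 0 be the unique solution of c(δ̂*) = (ε_min + 2σσ_F − ε)/(2σσ_F), and let 0 ≤ δ < δ̂*. Then for every q ∈ M_ε(μ,σ), J_δ(q) ≤ μ − δ(ε_min + 2σσ_F) + (σ/σ̂_{δ̂*})(∫ (γ + 2δ q_F) r̂_{δ̂*} − (1 + 2δμ_F) μ̂_{δ̂*}), with equality if and only if q = q̂_{δ̂*} almost everywhere. -/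

import Mathlib

open MeasureTheory Set Filter

noncomputable section

/-- Integral over the interval (0,1) with Lebesgue measure. -/
def intI (f : ℝ → ℝ) : ℝ := ∫ u in Ioo (0:ℝ) 1, f u

/-- Square integrability on (0,1). -/
def SqInt (f : ℝ → ℝ) : Prop :=
  IntegrableOn f (Ioo (0:ℝ) 1) volume ∧ IntegrableOn (fun u => f u ^ 2) (Ioo (0:ℝ) 1) volume

/-- A quantile function: nondecreasing and square-integrable on (0,1). -/
def IsQuantile (q : ℝ → ℝ) : Prop := MonotoneOn q (Ioo (0:ℝ) 1) ∧ SqInt q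

/-- Membership in `M(μ,σ)` : quantile function with prescribed first two moments. -/
def MemM (μ σ : ℝ) (q : ℝ → ℝ) : Prop :=
  IsQuantile q ∧ intI q = μ ∧ intI (fun u => q u ^ 2) = μ ^ 2 + σ ^ 2

/-- Squared Wasserstein distance between (quantile) functions on (0,1). -/
def W2 (p q : ℝ → ℝ) : ℝ := intI (fun u => (p u - q u) ^ 2)

/-- Almost-everywhere equality on (0,1). -/
def AeEqI (f g : ℝ → ℝ) : Prop := f =ᵐ[(volume : Measure ℝ).restrict (Ioo (0:ℝ) 1)] g

/-- The penalized objective `J_δ(q) = ∫ γ q − δ d²(q_F, q)`. -/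
def Jpen (γ qF : ℝ → ℝ) (δ : ℝ) (q : ℝ → ℝ) : ℝ :=
  intI (fun u => γ u * q u) - δ * W2 qF q

/-- `r` is the isotonic projection of `x` : it is nondecreasing, square-integrable, and satisfies
the variational inequality characterizing the metric projection onto the cone of
nondecreasing square-integrable functions on (0,1). -/
def IsIsoProj (x r : ℝ → ℝ) : Prop :=
  MonotoneOn r (Ioo (0:ℝ) 1) ∧ SqInt r ∧
  ∀ s : ℝ → ℝ, MonotoneOn s (Ioo (0:ℝ) 1) → SqInt s →
    intI (fun u => (x u - r u) * (s u - r u)) ≤ 0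

/-- `μ̂ = ∫ r`. -/
def muHat (r : ℝ → ℝ) : ℝ := intI r

/-- `σ̂ = sqrt(∫ r² − (∫ r)²)`. -/
def sigHat (r : ℝ → ℝ) : ℝ := Real.sqrt (intI (fun u => r u ^ 2) - muHat r ^ 2)

/-- `q̂(u) = μ − (σ/σ̂) μ̂ + (σ/σ̂) r(u)`. -/
def qHat (μ σ : ℝ) (r : ℝ → ℝ) : ℝ → ℝ := fun u =>
  μ - σ / sigHat r * muHat r + σ / sigHat r * r u

abbrev nuI : Measure ℝ := (volume : Measure ℝ).restrict (Ioo (0:ℝ) 1)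

instance : IsProbabilityMeasure nuI :=
  ⟨by simp [Measure.restrict_apply, Real.volume_Ioo]⟩

lemma intI_eq (f : ℝ → ℝ) : intI f = ∫ u, f u ∂nuI := rfl

lemma intI_const (c : ℝ) : intI (fun _ => c) = c := by
  rw [intI_eq, integral_const]; simp

lemma intI_nonneg {f : ℝ → ℝ} (hf : ∀ u, 0 ≤ f u) : 0 ≤ intI f := by
  rw [intI_eq]; exact integral_nonneg hf

lemma SqInt.mul_int {f g : ℝ → ℝ} (hf : SqInt f) (hg : SqInt g) :
    Integrable (fun u => f u * g u) nuI := by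
  refine Integrable.mono' (((hf.2.add hg.2).const_mul (1/2) : Integrable _ nuI))
    (hf.1.aestronglyMeasurable.mul hg.1.aestronglyMeasurable) ?_
  refine Eventually.of_forall fun x => ?_
  simp only [Real.norm_eq_abs, Pi.add_apply, abs_mul]
  nlinarith [abs_nonneg (f x), abs_nonneg (g x), sq_abs (f x), sq_abs (g x),
    sq_nonneg (|f x| - |g x|)]

lemma SqInt.affine {f : ℝ → ℝ} (hf : SqInt f) (c k : ℝ) :
    SqInt (fun u => c + k * f u) := by
  constructor
  · exact ((integrable_const c).add ((hf.1 : Integrable f nuI).const_mul k) : Integrable _ nuI)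
  · have h : (fun u => (c + k * f u) ^ 2)
        = fun u => (c ^ 2 + (2 * c * k) * f u) + k ^ 2 * f u ^ 2 :=
      funext fun u => by ring
    rw [show (IntegrableOn (fun u => (c + k * f u) ^ 2) (Ioo (0:ℝ) 1) volume)
        = Integrable (fun u => (c ^ 2 + (2 * c * k) * f u) + k ^ 2 * f u ^ 2) nuI from by rw [h]; rfl]
    exact (((integrable_const _).add ((hf.1 : Integrable f nuI).const_mul _)).add
      ((hf.2 : Integrable _ nuI).const_mul _))

lemma mono_affine {f : ℝ → ℝ} (hf : MonotoneOn f (Ioo (0:ℝ) 1)) (c k : ℝ) (hk : 0 ≤ k) :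
    MonotoneOn (fun u => c + k * f u) (Ioo (0:ℝ) 1) :=
  fun u hu v hv huv =>
    add_le_add_right (mul_le_mul_of_nonneg_left (hf hu hv huv) hk) c

lemma sq_sub_int {f g : ℝ → ℝ} (hf : SqInt f) (hg : SqInt g) :
    Integrable (fun u => (f u - g u) ^ 2) nuI := by
  have h : (fun u => (f u - g u) ^ 2)
      = fun u => (f u ^ 2 + g u ^ 2) + (-2) * (f u * g u) := funext fun u => by ring
  rw [h]
  exact ((hf.2 : Integrable _ nuI).add hg.2).add ((hf.mul_int hg).const_mul _)

lemma intI_comb6 {g f1 f2 f3 f4 f5 f6 : ℝ → ℝ} {c1 c2 c3 c4 c5 c6 : ℝ}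
    (h1 : Integrable f1 nuI) (h2 : Integrable f2 nuI) (h3 : Integrable f3 nuI)
    (h4 : Integrable f4 nuI) (h5 : Integrable f5 nuI) (h6 : Integrable f6 nuI)
    (hg : ∀ u, g u = c1 * f1 u + c2 * f2 u + c3 * f3 u + c4 * f4 u + c5 * f5 u + c6 * f6 u) :
    intI g = c1 * intI f1 + c2 * intI f2 + c3 * intI f3 + c4 * intI f4
      + c5 * intI f5 + c6 * intI f6 := by
  have i1 := h1.const_mul c1
  have i2 := h2.const_mul c2
  have i3 := h3.const_mul c3
  have i4 := h4.const_mul c4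
  have i5 := h5.const_mul c5
  have i6 := h6.const_mul c6
  have hge : g = fun u => c1 * f1 u + c2 * f2 u + c3 * f3 u + c4 * f4 u + c5 * f5 u + c6 * f6 u :=
    funext hg
  have j2 : Integrable (fun u => c1 * f1 u + c2 * f2 u) nuI := i1.add i2
  have j3 : Integrable (fun u => c1 * f1 u + c2 * f2 u + c3 * f3 u) nuI := j2.add i3
  have j4 : Integrable (fun u => c1 * f1 u + c2 * f2 u + c3 * f3 u + c4 * f4 u) nuI := j3.add i4
  have j5 : Integrable (fun u => c1 * f1 u + c2 * f2 u + c3 * f3 u + c4 * f4 u + c5 * f5 u) nuI :=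
    j4.add i5
  rw [intI_eq, hge]
  simp only [intI_eq]
  rw [integral_add j5 i6,
    integral_add j4 i5,
    integral_add j3 i4,
    integral_add j2 i3,
    integral_add i1 i2,
    integral_const_mul, integral_const_mul, integral_const_mul,
    integral_const_mul, integral_const_mul, integral_const_mul]
set_option maxHeartbeats 1000000 in
theorem statement18
    (μ μF σ σF : ℝ) (hσpos : 0 < σ) (hσFpos : 0 < σF)
    (qF : ℝ → ℝ) (hqF : IsQuantile qF)
    (hqFm : intI qF = μF) (hqF2 : intI (fun u => qF u ^ 2) = μF ^ 2 + σF ^ 2)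
    (εmin : ℝ) (hεmin : εmin = (μF - μ) ^ 2 + (σF - σ) ^ 2)
    (γ : ℝ → ℝ) (hγsq : SqInt γ) (hγ1 : intI γ = 1)
    (rhat : ℝ → ℝ → ℝ)
    (hproj : ∀ δ : ℝ, 0 ≤ δ → IsIsoProj (fun u => γ u + 2 * δ * qF u) (rhat δ))
    (hσh : ∀ δ : ℝ, 0 ≤ δ → 0 < sigHat (rhat δ))
    (c : ℝ → ℝ)
    (hc : ∀ δ : ℝ, c δ =
      (intI (fun u => qF u * rhat δ u) - μF * muHat (rhat δ)) / (σF * sigHat (rhat δ)))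
    (hccont : ContinuousOn c (Ioi 0))
    (hcmono : StrictMonoOn c (Ioi 0))
    (ρh : ℝ) (hρh : ρh = c 0) (hρh1 : ρh < 1)
    (hc0 : Tendsto c (nhdsWithin 0 (Ioi 0)) (nhds ρh))
    (hcinf : Tendsto c atTop (nhds 1))
    (εmaxh : ℝ) (hεmaxh : εmaxh = εmin + 2 * σ * σF * (1 - ρh))
    (ε : ℝ) (hε1 : εmin < ε) (hε2 : ε < εmaxh)
    (hdec : ∀ δ : ℝ, 0 ≤ δ →
      AntitoneOn (fun d : ℝ =>
        (intI (fun u => (γ u + 2 * δ * qF u) * rhat d u) -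
          (1 + 2 * δ * μF) * muHat (rhat d)) / sigHat (rhat d)) (Ioi δ))
    (δh : ℝ) (hδh0 : 0 < δh)
    (hδhc : c δh = (εmin + 2 * σ * σF - ε) / (2 * σ * σF))
    (δ : ℝ) (hδ0 : 0 ≤ δ) (hδ : δ < δh) :
    ∀ q : ℝ → ℝ, MemM μ σ q → W2 qF q ≤ ε →
      Jpen γ qF δ q ≤ μ - δ * (εmin + 2 * σ * σF) +
        σ / sigHat (rhat δh) *
          (intI (fun u => (γ u + 2 * δ * qF u) * rhat δh u) -
            (1 + 2 * δ * μF) * muHat (rhat δh)) ∧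
      (Jpen γ qF δ q = μ - δ * (εmin + 2 * σ * σF) +
        σ / sigHat (rhat δh) *
          (intI (fun u => (γ u + 2 * δ * qF u) * rhat δh u) -
            (1 + 2 * δ * μF) * muHat (rhat δh)) ↔
        AeEqI q (qHat μ σ (rhat δh))) := by
  subst hεmin
  intro q hq hWq
  obtain ⟨⟨hqmono, hqsq⟩, hqm, hq2⟩ := hq
  obtain ⟨hrmono, hrsq, hvar⟩ := hproj δh hδh0.le
  have hshp : 0 < sigHat (rhat δh) := hσh δh hδh0.le
  have hshne : sigHat (rhat δh) ≠ 0 := ne_of_gt hshp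
  have hσne : σ ≠ 0 := ne_of_gt hσpos
  have hσFne : σF ≠ 0 := ne_of_gt hσFpos
  -- integrability
  have iγ : Integrable γ nuI := hγsq.1
  have iqF : Integrable qF nuI := hqF.2.1
  have iq : Integrable q nuI := hqsq.1
  have ir : Integrable (rhat δh) nuI := hrsq.1
  have iγq : Integrable (fun u => γ u * q u) nuI := hγsq.mul_int hqsq
  have iqFq : Integrable (fun u => qF u * q u) nuI := hqF.2.mul_int hqsq
  have iγr : Integrable (fun u => γ u * rhat δh u) nuI := hγsq.mul_int hrsq
  have iqFr : Integrable (fun u => qF u * rhat δh u) nuI := hqF.2.mul_int hrsq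
  have iqr : Integrable (fun u => q u * rhat δh u) nuI := hqsq.mul_int hrsq
  have ir2 : Integrable (fun u => rhat δh u ^ 2) nuI := hrsq.2
  have iq2 : Integrable (fun u => q u ^ 2) nuI := hqsq.2
  have iqF2 : Integrable (fun u => qF u ^ 2) nuI := hqF.2.2
  have i1 : Integrable (fun _ : ℝ => (1:ℝ)) nuI := integrable_const 1
  -- mean of rhat δh
  have e1 := hvar (fun u => (1:ℝ) + 1 * rhat δh u)
    (mono_affine hrmono 1 1 zero_le_one) (hrsq.affine 1 1)
  have e2 := hvar (fun u => (-1:ℝ) + 1 * rhat δh u)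
    (mono_affine hrmono (-1) 1 zero_le_one) (hrsq.affine (-1) 1)
  simp only [] at e1 e2
  have e1' : intI (fun u => (γ u + 2 * δh * qF u - rhat δh u) * (1 + 1 * rhat δh u - rhat δh u))
      = 1 * intI γ + (2*δh) * intI qF + (-1) * intI (rhat δh)
        + 0 * intI (fun _ => (1:ℝ)) + 0 * intI (fun _ => (1:ℝ)) + 0 * intI (fun _ => (1:ℝ)) :=
    intI_comb6 iγ iqF ir i1 i1 i1 (fun u => by ring)
  have e2' : intI (fun u => (γ u + 2 * δh * qF u - rhat δh u) * (-1 + 1 * rhat δh u - rhat δh u))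
      = (-1) * intI γ + (-(2*δh)) * intI qF + 1 * intI (rhat δh)
        + 0 * intI (fun _ => (1:ℝ)) + 0 * intI (fun _ => (1:ℝ)) + 0 * intI (fun _ => (1:ℝ)) :=
    intI_comb6 iγ iqF ir i1 i1 i1 (fun u => by ring)
  rw [e1', hγ1, hqFm] at e1
  rw [e2', hγ1, hqFm] at e2
  have hmi : intI (rhat δh) = 1 + 2 * δh * μF := by linarith
  have hm' : muHat (rhat δh) = 1 + 2 * δh * μF := hmi
  -- second moment identity for rhat δh
  have e3 := hvar (fun u => (0:ℝ) + 2 * rhat δh u)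
    (mono_affine hrmono 0 2 (by norm_num)) (hrsq.affine 0 2)
  have e4 := hvar (fun u => (0:ℝ) + 0 * rhat δh u)
    (mono_affine hrmono 0 0 le_rfl) (hrsq.affine 0 0)
  simp only [] at e3 e4
  have e3' : intI (fun u => (γ u + 2 * δh * qF u - rhat δh u) * (0 + 2 * rhat δh u - rhat δh u))
      = 1 * intI (fun u => γ u * rhat δh u) + (2*δh) * intI (fun u => qF u * rhat δh u)
        + (-1) * intI (fun u => rhat δh u ^ 2)
        + 0 * intI (fun _ => (1:ℝ)) + 0 * intI (fun _ => (1:ℝ)) + 0 * intI (fun _ => (1:ℝ)) :=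
    intI_comb6 iγr iqFr ir2 i1 i1 i1 (fun u => by ring)
  have e4' : intI (fun u => (γ u + 2 * δh * qF u - rhat δh u) * (0 + 0 * rhat δh u - rhat δh u))
      = (-1) * intI (fun u => γ u * rhat δh u) + (-(2*δh)) * intI (fun u => qF u * rhat δh u)
        + 1 * intI (fun u => rhat δh u ^ 2)
        + 0 * intI (fun _ => (1:ℝ)) + 0 * intI (fun _ => (1:ℝ)) + 0 * intI (fun _ => (1:ℝ)) :=
    intI_comb6 iγr iqFr ir2 i1 i1 i1 (fun u => by ring)
  rw [e3'] at e3
  rw [e4'] at e4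
  have hE1 : intI (fun u => γ u * rhat δh u) + 2 * δh * intI (fun u => qF u * rhat δh u)
      = intI (fun u => rhat δh u ^ 2) := by linarith
  have ha : intI (fun u => γ u * rhat δh u)
      = intI (fun u => rhat δh u ^ 2) - 2 * δh * intI (fun u => qF u * rhat δh u) := by linarith
  -- projection inequality at q
  have e5 := hvar q hqmono hqsq
  simp only [] at e5
  have e5' : intI (fun u => (γ u + 2 * δh * qF u - rhat δh u) * (q u - rhat δh u))
      = 1 * intI (fun u => γ u * q u) + (2*δh) * intI (fun u => qF u * q u)
        + (-1) * intI (fun u => q u * rhat δh u) + (-1) * intI (fun u => γ u * rhat δh u)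
        + (-(2*δh)) * intI (fun u => qF u * rhat δh u) + 1 * intI (fun u => rhat δh u ^ 2) :=
    intI_comb6 iγq iqFq iqr iγr iqFr ir2 (fun u => by ring)
  rw [e5'] at e5
  have hT1 : intI (fun u => γ u * q u) + 2 * δh * intI (fun u => qF u * q u)
      ≤ intI (fun u => q u * rhat δh u) := by linarith
  -- sigma hat
  have h0 : (0:ℝ) < intI (fun u => rhat δh u ^ 2) - muHat (rhat δh) ^ 2 :=
    Real.sqrt_pos.mp hshp
  have hs2' : intI (fun u => rhat δh u ^ 2) = sigHat (rhat δh) ^ 2 + muHat (rhat δh) ^ 2 := by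
    have h2 : sigHat (rhat δh) ^ 2 = intI (fun u => rhat δh u ^ 2) - muHat (rhat δh) ^ 2 :=
      Real.sq_sqrt h0.le
    linarith
  -- correlation identity
  have hb : intI (fun u => qF u * rhat δh u)
      = μF * muHat (rhat δh) + σF * sigHat (rhat δh) * c δh := by
    rw [hc δh]; field_simp; ring
  -- W2 expansion
  have hWexp : W2 qF q = (μF^2 + σF^2) + (μ^2 + σ^2) - 2 * intI (fun u => qF u * q u) := by
    have e : intI (fun u => (qF u - q u) ^ 2)
        = 1 * intI (fun u => qF u ^ 2) + (-2) * intI (fun u => qF u * q u)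
          + 1 * intI (fun u => q u ^ 2)
          + 0 * intI (fun _ => (1:ℝ)) + 0 * intI (fun _ => (1:ℝ)) + 0 * intI (fun _ => (1:ℝ)) :=
      intI_comb6 iqF2 iqFq iq2 i1 i1 i1 (fun u => by ring)
    rw [show W2 qF q = intI (fun u => (qF u - q u) ^ 2) from rfl, e, hqF2, hq2]; ring
  -- D expansion
  have hDexp : intI (fun u => (q u - qHat μ σ (rhat δh) u) ^ 2)
      = 1 * (μ^2 + σ^2)
        + (-2*(μ - σ / sigHat (rhat δh) * muHat (rhat δh))) * μ
        + (-2*(σ / sigHat (rhat δh))) * intI (fun u => q u * rhat δh u)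
        + (2*(μ - σ / sigHat (rhat δh) * muHat (rhat δh))*(σ / sigHat (rhat δh))) * intI (rhat δh)
        + (σ / sigHat (rhat δh))^2 * intI (fun u => rhat δh u ^ 2)
        + (μ - σ / sigHat (rhat δh) * muHat (rhat δh))^2 * 1 := by
    have e : intI (fun u => (q u - qHat μ σ (rhat δh) u) ^ 2)
        = 1 * intI (fun u => q u ^ 2)
          + (-2*(μ - σ / sigHat (rhat δh) * muHat (rhat δh))) * intI q
          + (-2*(σ / sigHat (rhat δh))) * intI (fun u => q u * rhat δh u)
          + (2*(μ - σ / sigHat (rhat δh) * muHat (rhat δh))*(σ / sigHat (rhat δh))) * intI (rhat δh)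
          + (σ / sigHat (rhat δh))^2 * intI (fun u => rhat δh u ^ 2)
          + (μ - σ / sigHat (rhat δh) * muHat (rhat δh))^2 * intI (fun _ => (1:ℝ)) :=
      intI_comb6 iq2 iq iqr ir ir2 i1 (fun u => by simp only [qHat]; ring)
    rw [e, hq2, hqm, intI_const]
  -- RHS integral expansion
  have hRHSexp : intI (fun u => (γ u + 2 * δ * qF u) * rhat δh u)
      = 1 * intI (fun u => γ u * rhat δh u) + (2*δ) * intI (fun u => qF u * rhat δh u)
        + 0 * intI (fun _ => (1:ℝ)) + 0 * intI (fun _ => (1:ℝ))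
        + 0 * intI (fun _ => (1:ℝ)) + 0 * intI (fun _ => (1:ℝ)) :=
    intI_comb6 iγr iqFr i1 i1 i1 i1 (fun u => by ring)
  -- the key identity
  have KEY : (μ - δ * ((μF - μ) ^ 2 + (σF - σ) ^ 2 + 2 * σ * σF) +
        σ / sigHat (rhat δh) *
          (intI (fun u => (γ u + 2 * δ * qF u) * rhat δh u) -
            (1 + 2 * δ * μF) * muHat (rhat δh))) - Jpen γ qF δ q
      = (intI (fun u => q u * rhat δh u)
          - (intI (fun u => γ u * q u) + 2 * δh * intI (fun u => qF u * q u)))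
        + (sigHat (rhat δh) / (2 * σ)) * intI (fun u => (q u - qHat μ σ (rhat δh) u) ^ 2)
        + (δh - δ) * (ε - W2 qF q) := by
    rw [show Jpen γ qF δ q = intI (fun u => γ u * q u) - δ * W2 qF q from rfl]
    rw [hWexp, hDexp, hRHSexp, ha, hs2', hb, hδhc, hm', hmi]
    field_simp
    ring
  have hDge : 0 ≤ intI (fun u => (q u - qHat μ σ (rhat δh) u) ^ 2) :=
    intI_nonneg fun u => sq_nonneg _
  have hT2 : 0 ≤ (sigHat (rhat δh) / (2 * σ)) * intI (fun u => (q u - qHat μ σ (rhat δh) u) ^ 2) :=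
    mul_nonneg (div_nonneg hshp.le (by linarith)) hDge
  have hT3 : 0 ≤ (δh - δ) * (ε - W2 qF q) :=
    mul_nonneg (by linarith) (by linarith)
  refine ⟨by linarith, ?_, ?_⟩
  · -- equality → a.e. equality
    intro heq
    have hT2z : (sigHat (rhat δh) / (2 * σ)) * intI (fun u => (q u - qHat μ σ (rhat δh) u) ^ 2)
        = 0 := by linarith
    have hcoef : (0:ℝ) < sigHat (rhat δh) / (2 * σ) := div_pos hshp (by linarith)
    have hD0 : intI (fun u => (q u - qHat μ σ (rhat δh) u) ^ 2) = 0 := by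
      rcases mul_eq_zero.mp hT2z with h | h
      · exact absurd h hcoef.ne'
      · exact h
    have hqhat_sq : SqInt (qHat μ σ (rhat δh)) :=
      hrsq.affine (μ - σ / sigHat (rhat δh) * muHat (rhat δh)) (σ / sigHat (rhat δh))
    have h00 : (fun u => (q u - qHat μ σ (rhat δh) u) ^ 2) =ᵐ[nuI] 0 :=
      (integral_eq_zero_iff_of_nonneg_ae (Eventually.of_forall fun u => sq_nonneg _)
        (sq_sub_int hqsq hqhat_sq)).mp (by rw [← intI_eq]; exact hD0)
    show q =ᵐ[nuI] qHat μ σ (rhat δh)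
    filter_upwards [h00] with u hu
    have h2 : (q u - qHat μ σ (rhat δh) u) ^ 2 = 0 := by simpa using hu
    have h3 : q u - qHat μ σ (rhat δh) u = 0 := by
      exact sq_eq_zero_iff.mp h2
    linarith
  · -- a.e. equality → equality
    intro hae
    have hae' : q =ᵐ[nuI] qHat μ σ (rhat δh) := hae
    have hG : intI (fun u => γ u * q u)
        = (μ - σ / sigHat (rhat δh) * muHat (rhat δh))
          + (σ / sigHat (rhat δh)) * intI (fun u => γ u * rhat δh u) := by
      have hcongr : intI (fun u => γ u * q u) = intI (fun u => γ u * qHat μ σ (rhat δh) u) := by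
        rw [intI_eq, intI_eq]
        exact integral_congr_ae (hae'.mono fun u hu => by simp only []; rw [hu])
      have e : intI (fun u => γ u * qHat μ σ (rhat δh) u)
          = (μ - σ / sigHat (rhat δh) * muHat (rhat δh)) * intI γ
            + (σ / sigHat (rhat δh)) * intI (fun u => γ u * rhat δh u)
            + 0 * intI (fun _ => (1:ℝ)) + 0 * intI (fun _ => (1:ℝ))
            + 0 * intI (fun _ => (1:ℝ)) + 0 * intI (fun _ => (1:ℝ)) :=
        intI_comb6 iγ iγr i1 i1 i1 i1 (fun u => by simp only [qHat]; ring)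
      rw [hcongr, e, hγ1]; ring
    have hX : intI (fun u => qF u * q u)
        = (μ - σ / sigHat (rhat δh) * muHat (rhat δh)) * μF
          + (σ / sigHat (rhat δh)) * intI (fun u => qF u * rhat δh u) := by
      have hcongr : intI (fun u => qF u * q u) = intI (fun u => qF u * qHat μ σ (rhat δh) u) := by
        rw [intI_eq, intI_eq]
        exact integral_congr_ae (hae'.mono fun u hu => by simp only []; rw [hu])
      have e : intI (fun u => qF u * qHat μ σ (rhat δh) u)
          = (μ - σ / sigHat (rhat δh) * muHat (rhat δh)) * intI qF
            + (σ / sigHat (rhat δh)) * intI (fun u => qF u * rhat δh u)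
            + 0 * intI (fun _ => (1:ℝ)) + 0 * intI (fun _ => (1:ℝ))
            + 0 * intI (fun _ => (1:ℝ)) + 0 * intI (fun _ => (1:ℝ)) :=
        intI_comb6 iqF iqFr i1 i1 i1 i1 (fun u => by simp only [qHat]; ring)
      rw [hcongr, e, hqFm]; ring
    have hR : intI (fun u => q u * rhat δh u)
        = (μ - σ / sigHat (rhat δh) * muHat (rhat δh)) * intI (rhat δh)
          + (σ / sigHat (rhat δh)) * intI (fun u => rhat δh u ^ 2) := by
      have hcongr : intI (fun u => q u * rhat δh u)
          = intI (fun u => qHat μ σ (rhat δh) u * rhat δh u) := by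
        rw [intI_eq, intI_eq]
        exact integral_congr_ae (hae'.mono fun u hu => by simp only []; rw [hu])
      have e : intI (fun u => qHat μ σ (rhat δh) u * rhat δh u)
          = (μ - σ / sigHat (rhat δh) * muHat (rhat δh)) * intI (rhat δh)
            + (σ / sigHat (rhat δh)) * intI (fun u => rhat δh u ^ 2)
            + 0 * intI (fun _ => (1:ℝ)) + 0 * intI (fun _ => (1:ℝ))
            + 0 * intI (fun _ => (1:ℝ)) + 0 * intI (fun _ => (1:ℝ)) :=
        intI_comb6 ir ir2 i1 i1 i1 i1 (fun u => by simp only [qHat]; ring)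
      rw [hcongr, e]; ring
    have hD0 : intI (fun u => (q u - qHat μ σ (rhat δh) u) ^ 2) = 0 := by
      rw [intI_eq]
      exact integral_eq_zero_of_ae (hae'.mono fun u hu => by simp [hu])
    have hWε : W2 qF q = ε := by
      rw [hWexp, hX, hb, hδhc, hm']
      field_simp
      ring
    have hT1z : intI (fun u => q u * rhat δh u)
        - (intI (fun u => γ u * q u) + 2 * δh * intI (fun u => qF u * q u)) = 0 := by
      rw [hG, hX, hR, ha, hm', hmi]
      ring
    rw [hD0, hWε] at KEY
    linarith
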